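/- For all reals a, b > 0 and every real s, one has s·(log a − log b) ≤ √(a·b)·C(s/√(a·b)) + 2·(√a − √b)², where C(s) = 2·s·arsinh(s/2) − 2·√(s² + 4) + 4; moreover equality holds if and only if s = a − b. -/

import Mathlib

/-! Substituting `t = 2 sinh u` turns `Cfun t + CfunStar ζ - t ζ` into
`4 (cosh v - cosh u - (v - u) sinh u)` with `v = ζ / 2`: the gap in the tangent-line inequality
of the strictly convex function `cosh`, which vanishes only at `u = v`, i.e. `t = 2 sinh (ζ / 2)`.
For `ω = √(ab)` and `ζ = log a - log b` one has `exp (ζ / 2) = √a / √b`, whence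
`ω CfunStar ζ = 2 (√a - √b) ^ 2` and `2 ω sinh (ζ / 2) = a - b`. -/

/-- The Legendre conjugate of `C*(σ) = 4 cosh(σ/2) - 4`. -/
noncomputable def Cfun (s : ℝ) : ℝ :=
  2 * s * Real.arsinh (s / 2) - 2 * Real.sqrt (s ^ 2 + 4) + 4

open Real

noncomputable def CfunStar (σ : ℝ) : ℝ :=
  4 * cosh (σ / 2) - 4

lemma cosh_sub_cosh_sub_mul_sinh (u v : ℝ) :
    cosh v - cosh u - (v - u) * sinh u
      = (exp u * (exp (v - u) - (v - u + 1))
          + exp (-u) * (exp (-(v - u)) - (-(v - u) + 1))) / 2 := by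
  simp only [cosh_eq, sinh_eq, exp_sub, exp_neg]
  field_simp
  ring

lemma cosh_add_sub_mul_sinh_lt {u v : ℝ} (h : u ≠ v) : cosh u + (v - u) * sinh u < cosh v := by
  have hd : v - u ≠ 0 := sub_ne_zero.2 h.symm
  have h₁ : 0 < exp (v - u) - (v - u + 1) := sub_pos.2 (add_one_lt_exp hd)
  have h₂ : 0 ≤ exp (-(v - u)) - (-(v - u) + 1) := sub_nonneg.2 (add_one_le_exp _)
  have hgap : 0 < cosh v - cosh u - (v - u) * sinh u := by
    rw [cosh_sub_cosh_sub_mul_sinh]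
    positivity
  linarith

lemma cosh_add_sub_mul_sinh_le (u v : ℝ) : cosh u + (v - u) * sinh u ≤ cosh v := by
  rcases eq_or_ne u v with rfl | h
  · simp
  · exact (cosh_add_sub_mul_sinh_lt h).le

lemma Cfun_two_mul_sinh (u : ℝ) : Cfun (2 * sinh u) = 4 * u * sinh u - 4 * cosh u + 4 := by
  have hsqrt : √((2 * sinh u) ^ 2 + 4) = 2 * cosh u := by
    rw [← sqrt_sq (by positivity : 0 ≤ 2 * cosh u), mul_pow, mul_pow, cosh_sq]
    ring_nf
  rw [Cfun, mul_div_cancel_left₀ _ two_ne_zero, arsinh_sinh, hsqrt]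
  ring

theorem Cfun_fenchel_young (t ζ : ℝ) :
    t * ζ ≤ Cfun t + CfunStar ζ ∧ (t * ζ = Cfun t + CfunStar ζ ↔ t = 2 * sinh (ζ / 2)) := by
  obtain ⟨u, rfl⟩ : ∃ u, t = 2 * sinh u := ⟨arsinh (t / 2), by rw [sinh_arsinh]; ring⟩
  rw [Cfun_two_mul_sinh, CfunStar, mul_right_inj' two_ne_zero, sinh_inj]
  refine ⟨by linarith [cosh_add_sub_mul_sinh_le u (ζ / 2)], fun heq => ?_, ?_⟩
  · by_contra hne
    linarith [cosh_add_sub_mul_sinh_lt hne]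
  · rintro rfl
    ring

theorem Cfun_fenchel_young_weighted {ω : ℝ} (hω : 0 < ω) (s ζ : ℝ) :
    s * ζ ≤ ω * Cfun (s / ω) + ω * CfunStar ζ ∧
      (s * ζ = ω * Cfun (s / ω) + ω * CfunStar ζ ↔ s = 2 * ω * sinh (ζ / 2)) := by
  have hs : s * ζ = ω * (s / ω * ζ) := by field_simp
  rw [hs, ← mul_add, mul_le_mul_iff_right₀ hω, mul_right_inj' hω.ne',
    show 2 * ω * sinh (ζ / 2) = 2 * sinh (ζ / 2) * ω by ring, ← div_eq_iff hω.ne']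
  exact Cfun_fenchel_young _ _

lemma half_log_sub_log {a b : ℝ} (ha : 0 < a) (hb : 0 < b) :
    (log a - log b) / 2 = log (√a / √b) := by
  rw [log_div (by positivity) (by positivity), log_sqrt ha.le, log_sqrt hb.le]
  ring

lemma sqrt_mul_mul_CfunStar_log_sub_log {a b : ℝ} (ha : 0 < a) (hb : 0 < b) :
    √(a * b) * CfunStar (log a - log b) = 2 * (√a - √b) ^ 2 := by
  have hx : 0 < √a := sqrt_pos.2 ha
  have hy : 0 < √b := sqrt_pos.2 hb
  rw [CfunStar, half_log_sub_log ha hb, cosh_log (by positivity), sqrt_mul ha.le]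
  field_simp
  ring

lemma two_mul_sqrt_mul_mul_sinh_half_log_sub_log {a b : ℝ} (ha : 0 < a) (hb : 0 < b) :
    2 * √(a * b) * sinh ((log a - log b) / 2) = a - b := by
  have hx : 0 < √a := sqrt_pos.2 ha
  have hy : 0 < √b := sqrt_pos.2 hb
  rw [half_log_sub_log ha hb, sinh_log (by positivity), sqrt_mul ha.le]
  field_simp
  rw [sq_sqrt ha.le, sq_sqrt hb.le]

theorem fenchel_young_reaction (a b s : ℝ) (ha : 0 < a) (hb : 0 < b) :
    s * (Real.log a - Real.log b)
        ≤ Real.sqrt (a * b) * Cfun (s / Real.sqrt (a * b))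
            + 2 * (Real.sqrt a - Real.sqrt b) ^ 2 ∧
      (s * (Real.log a - Real.log b)
          = Real.sqrt (a * b) * Cfun (s / Real.sqrt (a * b))
              + 2 * (Real.sqrt a - Real.sqrt b) ^ 2 ↔ s = a - b) := by
  have h := Cfun_fenchel_young_weighted (sqrt_pos.2 (mul_pos ha hb)) s (log a - log b)
  rwa [sqrt_mul_mul_CfunStar_log_sub_log ha hb,
    two_mul_sqrt_mul_mul_sinh_half_log_sub_log ha hb] at h
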